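/- Region-growing lemma with edge and node lengths (edge-deletion node-multicut version): in the mixed edge/node region-growing setup, for all real numbers 0 ≤ a < b one has ∫_a^b c(∂x(ρ)) / ( Vol(ρ) · ln( e·Vol(b)/Vol(ρ) ) ) dρ ≤ ln ln( e·Vol(b)/Vol(a) ) and ∫_a^b c(∂x(ρ)) / ( cVol(ρ) · ln( e·cVol(a)/cVol(ρ) ) ) dρ ≤ ln ln( e·cVol(a)/cVol(b) ). Equivalently, if ρ is uniform on [a,b), the expectations of the two integrands are at most (1/(b−a)) times the respective right-hand sides. -/

import Mathlib

open scoped Classical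

namespace MixedRegionGrow

variable {V : Type*}

/-- The smaller of the two values of `g` at the endpoints of an edge. -/
noncomputable def dmin (g : V → ℝ) : Sym2 V → ℝ :=
  Sym2.lift ⟨fun a b => min (g a) (g b), fun a b => min_comm _ _⟩

/-- The larger of the two values of `g` at the endpoints of an edge. -/
noncomputable def dmax (g : V → ℝ) : Sym2 V → ℝ :=
  Sym2.lift ⟨fun a b => max (g a) (g b), fun a b => max_comm _ _⟩

/-- The ball `B(ρ)` (w.r.t. the distance function `g = ℓ(z;·)`). -/
noncomputable def ball (g : V → ℝ) (S : Finset V) (ρ : ℝ) : Finset V :=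
  S.filter fun v => g v ≤ ρ

/-- The node-boundary `Γy(ρ) = {v ∈ S : ρ < ℓ(z;v) ≤ ρ + y_v}`. -/
noncomputable def gy (g : V → ℝ) (yv : V → ℝ) (S : Finset V) (ρ : ℝ) : Finset V :=
  S.filter fun v => ρ < g v ∧ g v ≤ ρ + yv v

/-- The edge-boundary
`∂x(ρ) = {(u,v) ∈ E : u, v ∈ S, ℓ(z;u) ≤ ρ, ℓ(z;v) - y_v > ρ}`. -/
noncomputable def bdx [Fintype V] [DecidableEq V] (G : SimpleGraph V) [DecidableRel G.Adj]
    (g : V → ℝ) (yv : V → ℝ) (S : Finset V) (ρ : ℝ) : Finset (Sym2 V) :=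
  G.edgeFinset.filter fun e =>
    ∃ u w, e = s(u, w) ∧ u ∈ S ∧ w ∈ S ∧ g u ≤ ρ ∧ ρ < g w - yv w

/-- `B̄(ρ) = S \ (B(ρ) ∪ Γy(ρ))`. -/
noncomputable def bbar (g : V → ℝ) (yv : V → ℝ) (S : Finset V) (ρ : ℝ) : Finset V :=
  S \ (ball g S ρ ∪ gy g yv S ρ)

/-- The volume `Vol(ρ)`; for an `∂x(ρ)`-edge the endpoint `u ∈ B(ρ)` is the one closer
to `z`, so its distance to `z` is `min` of the two endpoint distances. -/
noncomputable def vol [Fintype V] [DecidableEq V] (G : SimpleGraph V) [DecidableRel G.Adj]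
    (c x : Sym2 V → ℝ) (g : V → ℝ) (yv : V → ℝ) (S : Finset V) (β ρ : ℝ) : ℝ :=
  β + ∑ e ∈ G.edgeFinset.filter (fun e =>
        (∃ w ∈ e, w ∈ ball g S ρ) ∧ ∀ w ∈ e, w ∈ ball g S ρ ∪ gy g yv S ρ),
        c e * x e
    + ∑ e ∈ bdx G g yv S ρ, c e * (ρ - dmin g e)

/-- The complementary volume `cVol(ρ)`; for an `∂x(ρ)`-edge the far endpoint `v`
maximizes `ℓ(z;·) - y`, so the term `ℓ(z;v) - ρ - y_v` equals
`max (g - y) over the endpoints, minus ρ`. -/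
noncomputable def cvol [Fintype V] [DecidableEq V] (G : SimpleGraph V) [DecidableRel G.Adj]
    (c x : Sym2 V → ℝ) (g : V → ℝ) (yv : V → ℝ) (S : Finset V) (β ρ : ℝ) : ℝ :=
  β + ∑ e ∈ G.edgeFinset.filter (fun e =>
        (∃ w ∈ e, w ∈ bbar g yv S ρ) ∧ ∀ w ∈ e, w ∈ bbar g yv S ρ ∪ gy g yv S ρ),
        c e * x e
    + ∑ e ∈ bdx G g yv S ρ, c e * (dmax (fun w => g w - yv w) e - ρ)

/-!
With `Φ_K(u) = log log (e K / u)` one has `Φ_K'(u) = -1 / (u log (e K / u))`. Off the finitely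
many breakpoints `ℓ(z;v)`, `ℓ(z;v) - y_v` (`v ∈ S`) the sets `B(ρ)`, `Γy(ρ)`, `∂x(ρ)` do not
change, so `Vol` is affine in `ρ` with slope `c(∂x(ρ))` and `cVol` with slope `-c(∂x(ρ))`: the
two integrands are the derivatives of `-Φ_K ∘ Vol` (`K = Vol(b)`) and `Φ_K ∘ cVol`
(`K = cVol(a)`). At a breakpoint `Vol` can only jump up and `cVol` only down, because when an
edge `uw` leaves `∂x(ρ)` the triangle inequality `ℓ(z;w) ≤ ℓ(z;u) + x_{uw} + y_w` bounds its
partial length by the full length `x_{uw}` it is counted with afterwards. Hence both compositions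
are monotone on `[a, b]`, and the integral of the derivative of a monotone function is at most
its increment.
-/

open MeasureTheory Set Filter Topology

lemma integral_le_sub_of_monotoneOn_of_hasDerivAt {G g : ℝ → ℝ} {a b : ℝ} {T : Set ℝ}
    (hab : a ≤ b) (hG : MonotoneOn G (Icc a b)) (hT : T.Countable)
    (hderiv : ∀ x ∈ Ioo a b \ T, HasDerivAt G (g x) x) :
    ∫ x in a..b, g x ≤ G b - G a := by
  have hae : ∀ᵐ x, x ∈ uIoc a b → g x = deriv G x := by
    filter_upwards [(hT.insert b).ae_notMem volume] with x hx hxab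
    rw [uIoc_of_le hab] at hxab
    rw [mem_insert_iff, not_or] at hx
    exact (hderiv x ⟨⟨hxab.1, hxab.2.lt_of_ne hx.1⟩, hx.2⟩).deriv.symm
  have hGab : 0 ≤ G b - G a := sub_nonneg.2 (hG (left_mem_Icc.2 hab) (right_mem_Icc.2 hab) hab)
  have hmem := (uIcc_of_le hab ▸ hG).intervalIntegral_deriv_mem_uIcc
  rw [intervalIntegral.integral_congr_ae hae]
  exact (uIcc_of_le hGab ▸ hmem).2

lemma one_le_log_exp_one_mul_div {K u : ℝ} (hu : 0 < u) (huK : u ≤ K) :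
    1 ≤ Real.log (Real.exp 1 * K / u) := by
  rw [Real.le_log_iff_exp_le (by have := hu.trans_le huK; positivity), le_div_iff₀ hu]
  nlinarith [Real.exp_pos 1]

lemma hasDerivAt_log_log_div {K u : ℝ} (hu : 0 < u) (huK : u ≤ K) :
    HasDerivAt (fun v => Real.log (Real.log (Real.exp 1 * K / v)))
      (-(1 / (u * Real.log (Real.exp 1 * K / u)))) u := by
  have hK : 0 < K := hu.trans_le huK
  have hL := one_le_log_exp_one_mul_div hu huK
  have h := (((hasDerivAt_inv hu.ne').const_mul (Real.exp 1 * K)).log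
    (by positivity)).log (by rw [← div_eq_mul_inv]; positivity)
  simp only [← div_eq_mul_inv] at h
  convert h using 1
  field_simp

lemma antitoneOn_log_log_div (K : ℝ) :
    AntitoneOn (fun v => Real.log (Real.log (Real.exp 1 * K / v))) (Ioc 0 K) := by
  intro u hu v hv huv
  have hK : 0 < K := hu.1.trans_le hu.2
  have hv1 := one_le_log_exp_one_mul_div hv.1 hv.2
  refine Real.log_le_log (by linarith) (Real.log_le_log (by have := hv.1; positivity) ?_)
  exact div_le_div_of_nonneg_left (by positivity) hu.1 huv

lemma integral_div_mul_log_le_of_monotoneOn {F f : ℝ → ℝ} {a b K : ℝ} {T : Set ℝ}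
    (hab : a ≤ b) (hF : MonotoneOn F (Icc a b)) (hFK : MapsTo F (Icc a b) (Ioc 0 K))
    (hT : T.Countable) (hderiv : ∀ ρ ∈ Ioo a b \ T, HasDerivAt F (f ρ) ρ) :
    ∫ ρ in a..b, f ρ / (F ρ * Real.log (Real.exp 1 * K / F ρ)) ≤
      Real.log (Real.log (Real.exp 1 * K / F a)) - Real.log (Real.log (Real.exp 1 * K / F b)) := by
  have hmono := ((antitoneOn_log_log_div K).comp_MonotoneOn hF hFK).neg
  refine (integral_le_sub_of_monotoneOn_of_hasDerivAt hab hmono hT fun ρ hρ => ?_).trans_eq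
    (by simp only [Function.comp_apply]; ring)
  have hρ' := hFK (Ioo_subset_Icc_self hρ.1)
  exact ((hasDerivAt_log_log_div hρ'.1 hρ'.2).comp ρ (hderiv ρ hρ)).neg.congr_deriv (by ring)

lemma integral_div_mul_log_le_of_antitoneOn {F f : ℝ → ℝ} {a b K : ℝ} {T : Set ℝ}
    (hab : a ≤ b) (hF : AntitoneOn F (Icc a b)) (hFK : MapsTo F (Icc a b) (Ioc 0 K))
    (hT : T.Countable) (hderiv : ∀ ρ ∈ Ioo a b \ T, HasDerivAt F (-f ρ) ρ) :
    ∫ ρ in a..b, f ρ / (F ρ * Real.log (Real.exp 1 * K / F ρ)) ≤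
      Real.log (Real.log (Real.exp 1 * K / F b)) - Real.log (Real.log (Real.exp 1 * K / F a)) := by
  have hmono := (antitoneOn_log_log_div K).comp hF hFK
  refine integral_le_sub_of_monotoneOn_of_hasDerivAt hab hmono hT fun ρ hρ => ?_
  have hρ' := hFK (Ioo_subset_Icc_self hρ.1)
  exact ((hasDerivAt_log_log_div hρ'.1 hρ'.2).comp ρ (hderiv ρ hρ)).congr_deriv (by ring)

lemma log_log_exp_one_mul_div_self {K : ℝ} (hK : K ≠ 0) :
    Real.log (Real.log (Real.exp 1 * K / K)) = 0 := by
  rw [mul_div_assoc, div_self hK, mul_one, Real.log_exp, Real.log_one]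

section Walks

variable {G : SimpleGraph V} (x : Sym2 V → ℝ) (y : V → ℝ)

def walkCost {u v : V} (p : G.Walk u v) : ℝ :=
  (p.edges.map x).sum + (p.support.tail.map y).sum

variable {x y}

lemma walkCost_append {u v w : V} (p : G.Walk u v) (q : G.Walk v w) :
    walkCost x y (p.append q) = walkCost x y p + walkCost x y q := by
  simp only [walkCost, SimpleGraph.Walk.edges_append, SimpleGraph.Walk.tail_support_append,
    List.map_append, List.sum_append]
  ring

lemma walkCost_concat {u v w : V} (p : G.Walk u v) (h : G.Adj v w) :
    walkCost x y (p.concat h) = walkCost x y p + x s(v, w) + y w := by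
  rw [SimpleGraph.Walk.concat, walkCost_append, add_assoc]
  simp [walkCost]

lemma walkCost_nonneg (hx : ∀ e, 0 ≤ x e) (hy : ∀ v, 0 ≤ y v) {u v : V} (p : G.Walk u v) :
    0 ≤ walkCost x y p :=
  add_nonneg (List.sum_nonneg fun _ h => by obtain ⟨e, -, rfl⟩ := List.mem_map.1 h; exact hx e)
    (List.sum_nonneg fun _ h => by obtain ⟨v, -, rfl⟩ := List.mem_map.1 h; exact hy v)

lemma walkCost_takeUntil_le [DecidableEq V] (hx : ∀ e, 0 ≤ x e) (hy : ∀ v, 0 ≤ y v)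
    {u v w : V} (p : G.Walk u v) (h : w ∈ p.support) :
    walkCost x y (p.takeUntil w h) ≤ walkCost x y p := by
  conv_rhs => rw [← p.take_spec h, walkCost_append]
  linarith [walkCost_nonneg hx hy (p.dropUntil w h)]

lemma le_walkCost_add_of_adj [DecidableEq V] (hx : ∀ e, 0 ≤ x e) (hy : ∀ v, 0 ≤ y v)
    {z u w : V} {dw : ℝ} (hle : ∀ p : G.Walk z w, p.IsPath → dw ≤ walkCost x y p)
    (p : G.Walk z u) (hp : p.IsPath) (h : G.Adj u w) :
    dw ≤ walkCost x y p + x s(u, w) + y w := by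
  by_cases hw : w ∈ p.support
  · calc dw ≤ walkCost x y (p.takeUntil w hw) := hle _ (hp.takeUntil hw)
      _ ≤ walkCost x y p := walkCost_takeUntil_le hx hy p hw
      _ ≤ _ := by linarith [hx s(u, w), hy w]
  · calc dw ≤ walkCost x y (p.concat h) := hle _ (hp.concat hw h)
      _ = _ := walkCost_concat p h

end Walks

section Regions

variable {g yv : V → ℝ} {S : Finset V} {ρ ρ' : ℝ} {v : V}

lemma mem_ball : v ∈ ball g S ρ ↔ v ∈ S ∧ g v ≤ ρ := Finset.mem_filter

lemma mem_gy : v ∈ gy g yv S ρ ↔ v ∈ S ∧ ρ < g v ∧ g v ≤ ρ + yv v := Finset.mem_filter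

lemma mem_ball_union_gy [DecidableEq V] (hv : 0 ≤ yv v) :
    v ∈ ball g S ρ ∪ gy g yv S ρ ↔ v ∈ S ∧ g v - yv v ≤ ρ := by
  rw [Finset.mem_union, mem_ball, mem_gy, sub_le_iff_le_add]
  constructor
  · rintro (⟨hS, h⟩ | ⟨hS, -, h⟩) <;> exact ⟨hS, by linarith⟩
  · rintro ⟨hS, h⟩
    exact (le_or_gt (g v) ρ).imp (⟨hS, ·⟩) (⟨hS, ·, h⟩)

lemma mem_bbar (hv : 0 ≤ yv v) : v ∈ bbar g yv S ρ ↔ v ∈ S ∧ ρ < g v - yv v := by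
  rw [bbar, Finset.mem_sdiff, mem_ball_union_gy hv, not_and, not_le]
  exact ⟨fun h => ⟨h.1, h.2 h.1⟩, fun h => ⟨h.1, fun _ => h.2⟩⟩

lemma ball_mono (h : ρ ≤ ρ') : ball g S ρ ⊆ ball g S ρ' := fun _ hv =>
  mem_ball.2 ⟨(mem_ball.1 hv).1, (mem_ball.1 hv).2.trans h⟩

lemma bbar_anti (hyv : ∀ v, 0 ≤ yv v) (h : ρ ≤ ρ') : bbar g yv S ρ' ⊆ bbar g yv S ρ :=
  fun v hv => by
  rw [mem_bbar (hyv v)] at hv ⊢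
  exact ⟨hv.1, h.trans_lt hv.2⟩

variable [DecidableEq V]

lemma mem_bbar_union_gy (hv : 0 ≤ yv v) :
    v ∈ bbar g yv S ρ ∪ gy g yv S ρ ↔ v ∈ S ∧ ρ < g v := by
  rw [Finset.mem_union, mem_bbar hv, mem_gy]
  constructor
  · rintro (⟨hS, h⟩ | ⟨hS, h, -⟩) <;> exact ⟨hS, by linarith⟩
  · rintro ⟨hS, h⟩
    exact (lt_or_ge (ρ + yv v) (g v)).imp (fun _ => ⟨hS, by linarith⟩) (⟨hS, h, ·⟩)

lemma ball_union_gy_mono (hyv : ∀ v, 0 ≤ yv v) (h : ρ ≤ ρ') :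
    ball g S ρ ∪ gy g yv S ρ ⊆ ball g S ρ' ∪ gy g yv S ρ' := fun v hv => by
  rw [mem_ball_union_gy (hyv v)] at hv ⊢
  exact ⟨hv.1, hv.2.trans h⟩

lemma bbar_union_gy_anti (hyv : ∀ v, 0 ≤ yv v) (h : ρ ≤ ρ') :
    bbar g yv S ρ' ∪ gy g yv S ρ' ⊆ bbar g yv S ρ ∪ gy g yv S ρ := fun v hv => by
  rw [mem_bbar_union_gy (hyv v)] at hv ⊢
  exact ⟨hv.1, h.trans_lt hv.2⟩

end Regions

/-- An edge with an endpoint in `A` and both endpoints in `A ∪ B`; with `A = B(ρ)` (resp.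
`A = B̄(ρ)`) and `B = Γy(ρ)` these are the edges counted with their full length in `Vol(ρ)`
(resp. `cVol(ρ)`). -/
def IsInnerEdge [DecidableEq V] (A B : Finset V) (e : Sym2 V) : Prop :=
  (∃ w ∈ e, w ∈ A) ∧ ∀ w ∈ e, w ∈ A ∪ B

lemma IsInnerEdge.mono [DecidableEq V] {A B A' B' : Finset V} {e : Sym2 V}
    (h : IsInnerEdge A B e) (hA : A ⊆ A') (hAB : A ∪ B ⊆ A' ∪ B') : IsInnerEdge A' B' e :=
  ⟨h.1.imp fun _ hw => ⟨hw.1, hA hw.2⟩, fun w hw => hAB (h.2 w hw)⟩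

lemma dmin_mk_of_le {g : V → ℝ} {u w : V} (h : g u ≤ g w) : dmin g s(u, w) = g u := min_eq_left h

lemma dmax_mk_of_le {g : V → ℝ} {u w : V} (h : g u ≤ g w) : dmax g s(u, w) = g w := max_eq_right h

section Volume

variable [Fintype V] [DecidableEq V] {G : SimpleGraph V} [DecidableRel G.Adj]
  {c x : Sym2 V → ℝ} {g yv : V → ℝ} {S : Finset V} {β b ρ ρ' : ℝ} {e : Sym2 V}

lemma mem_bdx : e ∈ bdx G g yv S ρ ↔
    e ∈ G.edgeFinset ∧ ∃ u w, e = s(u, w) ∧ u ∈ S ∧ w ∈ S ∧ g u ≤ ρ ∧ ρ < g w - yv w :=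
  Finset.mem_filter

lemma sum_bdx_eq_sum_ite (f : Sym2 V → ℝ) :
    ∑ e ∈ bdx G g yv S ρ, f e = ∑ e ∈ G.edgeFinset, if e ∈ bdx G g yv S ρ then f e else 0 := by
  rw [Finset.sum_ite_mem, Finset.inter_eq_right.2 fun _ he => (mem_bdx.1 he).1]

lemma not_isInnerEdge_ball_of_mem_bdx (hyv : ∀ v, 0 ≤ yv v) (he : e ∈ bdx G g yv S ρ) :
    ¬ IsInnerEdge (ball g S ρ) (gy g yv S ρ) e := by
  obtain ⟨-, u, w, rfl, -, -, -, hw⟩ := mem_bdx.1 he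
  intro h
  linarith [((mem_ball_union_gy (hyv w)).1 (h.2 w (Sym2.mem_mk_right u w))).2]

lemma not_isInnerEdge_bbar_of_mem_bdx (hyv : ∀ v, 0 ≤ yv v) (he : e ∈ bdx G g yv S ρ) :
    ¬ IsInnerEdge (bbar g yv S ρ) (gy g yv S ρ) e := by
  obtain ⟨-, u, w, rfl, -, -, hu, -⟩ := mem_bdx.1 he
  intro h
  linarith [((mem_bbar_union_gy (hyv u)).1 (h.2 u (Sym2.mem_mk_left u w))).2]

variable (G c x g yv S) in
noncomputable def volEdge (ρ : ℝ) (e : Sym2 V) : ℝ :=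
  (if IsInnerEdge (ball g S ρ) (gy g yv S ρ) e then c e * x e else 0) +
    if e ∈ bdx G g yv S ρ then c e * (ρ - dmin g e) else 0

variable (G c x g yv S) in
noncomputable def cvolEdge (ρ : ℝ) (e : Sym2 V) : ℝ :=
  (if IsInnerEdge (bbar g yv S ρ) (gy g yv S ρ) e then c e * x e else 0) +
    if e ∈ bdx G g yv S ρ then c e * (dmax (fun w => g w - yv w) e - ρ) else 0

lemma vol_eq_sum_volEdge :
    vol G c x g yv S β ρ = β + ∑ e ∈ G.edgeFinset, volEdge G c x g yv S ρ e := by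
  rw [vol, sum_bdx_eq_sum_ite, Finset.sum_filter, add_assoc, ← Finset.sum_add_distrib]
  -- the two sides differ only in the `Decidable` instances of the first `if`
  exact congrArg _ (Finset.sum_congr rfl fun _ _ => congrArg (· + _) (if_congr Iff.rfl rfl rfl))

lemma cvol_eq_sum_cvolEdge :
    cvol G c x g yv S β ρ = β + ∑ e ∈ G.edgeFinset, cvolEdge G c x g yv S ρ e := by
  rw [cvol, sum_bdx_eq_sum_ite, Finset.sum_filter, add_assoc, ← Finset.sum_add_distrib]
  exact congrArg _ (Finset.sum_congr rfl fun _ _ => congrArg (· + _) (if_congr Iff.rfl rfl rfl))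

lemma volEdge_nonneg (hc : ∀ e, 0 ≤ c e) (hx : ∀ e, 0 ≤ x e) (hyv : ∀ v, 0 ≤ yv v) :
    0 ≤ volEdge G c x g yv S ρ e := by
  refine add_nonneg ?_ ?_ <;> split_ifs with h
  · exact mul_nonneg (hc e) (hx e)
  · exact le_rfl
  · obtain ⟨-, u, w, rfl, -, -, hu, hw⟩ := mem_bdx.1 h
    rw [dmin_mk_of_le (by linarith [hyv w])]
    exact mul_nonneg (hc _) (by linarith)
  · exact le_rfl

lemma cvolEdge_nonneg (hc : ∀ e, 0 ≤ c e) (hx : ∀ e, 0 ≤ x e) (hyv : ∀ v, 0 ≤ yv v) :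
    0 ≤ cvolEdge G c x g yv S ρ e := by
  refine add_nonneg ?_ ?_ <;> split_ifs with h
  · exact mul_nonneg (hc e) (hx e)
  · exact le_rfl
  · obtain ⟨-, u, w, rfl, -, -, hu, hw⟩ := mem_bdx.1 h
    rw [dmax_mk_of_le (by linarith [hyv u])]
    exact mul_nonneg (hc _) (by linarith)
  · exact le_rfl

lemma volEdge_mono (hc : ∀ e, 0 ≤ c e) (hx : ∀ e, 0 ≤ x e) (hyv : ∀ v, 0 ≤ yv v)
    (htri : ∀ u w, G.Adj u w → g u ≤ b → g w ≤ g u + x s(u, w) + yv w) (he : e ∈ G.edgeFinset)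
    (hρ : ρ ≤ ρ') (hρb : ρ' ≤ b) :
    volEdge G c x g yv S ρ e ≤ volEdge G c x g yv S ρ' e := by
  by_cases h : e ∈ bdx G g yv S ρ
  · obtain ⟨-, u, w, rfl, hu, hw, hgu, hgw⟩ := mem_bdx.1 h
    have hmin : dmin g s(u, w) = g u := dmin_mk_of_le (by linarith [hyv w])
    rw [volEdge, if_neg (not_isInnerEdge_ball_of_mem_bdx hyv h), if_pos h, zero_add, hmin]
    by_cases h' : s(u, w) ∈ bdx G g yv S ρ'
    · rw [volEdge, if_neg (not_isInnerEdge_ball_of_mem_bdx hyv h'), if_pos h', zero_add, hmin]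
      exact mul_le_mul_of_nonneg_left (by linarith) (hc _)
    · have hgw' : g w - yv w ≤ ρ' := by
        by_contra! hlt
        exact h' (mem_bdx.2 ⟨he, u, w, rfl, hu, hw, hgu.trans hρ, hlt⟩)
      have hin : IsInnerEdge (ball g S ρ') (gy g yv S ρ') s(u, w) := by
        refine ⟨⟨u, Sym2.mem_mk_left u w, mem_ball.2 ⟨hu, hgu.trans hρ⟩⟩, fun v hv => ?_⟩
        rw [mem_ball_union_gy (hyv v)]
        rcases Sym2.mem_iff.1 hv with rfl | rfl
        · exact ⟨hu, by linarith [hyv v]⟩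
        · exact ⟨hw, hgw'⟩
      rw [volEdge, if_pos hin, if_neg h', add_zero]
      have := htri u w (SimpleGraph.mem_edgeFinset.1 he) (by linarith)
      exact mul_le_mul_of_nonneg_left (by linarith) (hc _)
  · rw [volEdge, if_neg h, add_zero]
    split_ifs with hin
    · have hin' := hin.mono (ball_mono hρ) (ball_union_gy_mono hyv hρ)
      rw [volEdge, if_pos hin', if_neg fun h' => not_isInnerEdge_ball_of_mem_bdx hyv h' hin',
        add_zero]
    · exact volEdge_nonneg hc hx hyv

lemma cvolEdge_anti (hc : ∀ e, 0 ≤ c e) (hx : ∀ e, 0 ≤ x e) (hyv : ∀ v, 0 ≤ yv v)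
    (htri : ∀ u w, G.Adj u w → g u ≤ b → g w ≤ g u + x s(u, w) + yv w) (he : e ∈ G.edgeFinset)
    (hρ : ρ ≤ ρ') (hρb : ρ' ≤ b) :
    cvolEdge G c x g yv S ρ' e ≤ cvolEdge G c x g yv S ρ e := by
  by_cases h' : e ∈ bdx G g yv S ρ'
  · obtain ⟨-, u, w, rfl, hu, hw, hgu, hgw⟩ := mem_bdx.1 h'
    have hmax : dmax (fun v => g v - yv v) s(u, w) = g w - yv w :=
      dmax_mk_of_le (by linarith [hyv u])
    rw [cvolEdge, if_neg (not_isInnerEdge_bbar_of_mem_bdx hyv h'), if_pos h', zero_add, hmax]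
    by_cases h : s(u, w) ∈ bdx G g yv S ρ
    · rw [cvolEdge, if_neg (not_isInnerEdge_bbar_of_mem_bdx hyv h), if_pos h, zero_add, hmax]
      exact mul_le_mul_of_nonneg_left (by linarith) (hc _)
    · have hgu' : ρ < g u := by
        by_contra! hle
        exact h (mem_bdx.2 ⟨he, u, w, rfl, hu, hw, hle, hρ.trans_lt hgw⟩)
      have hin : IsInnerEdge (bbar g yv S ρ) (gy g yv S ρ) s(u, w) := by
        refine ⟨⟨w, Sym2.mem_mk_right u w, (mem_bbar (hyv w)).2 ⟨hw, by linarith⟩⟩,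
          fun v hv => ?_⟩
        rw [mem_bbar_union_gy (hyv v)]
        rcases Sym2.mem_iff.1 hv with rfl | rfl
        · exact ⟨hu, hgu'⟩
        · exact ⟨hw, by linarith [hyv v]⟩
      rw [cvolEdge, if_pos hin, if_neg h, add_zero]
      have := htri u w (SimpleGraph.mem_edgeFinset.1 he) (hgu.trans hρb)
      exact mul_le_mul_of_nonneg_left (by linarith) (hc _)
  · rw [cvolEdge, if_neg h', add_zero]
    split_ifs with hin
    · have hin' := hin.mono (bbar_anti hyv hρ) (bbar_union_gy_anti hyv hρ)
      rw [cvolEdge, if_pos hin', if_neg fun h => not_isInnerEdge_bbar_of_mem_bdx hyv h hin',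
        add_zero]
    · exact cvolEdge_nonneg hc hx hyv

lemma beta_le_vol (hc : ∀ e, 0 ≤ c e) (hx : ∀ e, 0 ≤ x e) (hyv : ∀ v, 0 ≤ yv v) :
    β ≤ vol G c x g yv S β ρ := by
  rw [vol_eq_sum_volEdge]
  exact le_add_of_nonneg_right (Finset.sum_nonneg fun _ _ => volEdge_nonneg hc hx hyv)

lemma beta_le_cvol (hc : ∀ e, 0 ≤ c e) (hx : ∀ e, 0 ≤ x e) (hyv : ∀ v, 0 ≤ yv v) :
    β ≤ cvol G c x g yv S β ρ := by
  rw [cvol_eq_sum_cvolEdge]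
  exact le_add_of_nonneg_right (Finset.sum_nonneg fun _ _ => cvolEdge_nonneg hc hx hyv)

lemma vol_monotoneOn (hc : ∀ e, 0 ≤ c e) (hx : ∀ e, 0 ≤ x e) (hyv : ∀ v, 0 ≤ yv v)
    (htri : ∀ u w, G.Adj u w → g u ≤ b → g w ≤ g u + x s(u, w) + yv w) :
    MonotoneOn (vol G c x g yv S β) (Iic b) := fun _ _ _ hρb hρ => by
  simp only [vol_eq_sum_volEdge]
  gcongr with e he
  exact volEdge_mono hc hx hyv htri he hρ hρb

lemma cvol_antitoneOn (hc : ∀ e, 0 ≤ c e) (hx : ∀ e, 0 ≤ x e) (hyv : ∀ v, 0 ≤ yv v)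
    (htri : ∀ u w, G.Adj u w → g u ≤ b → g w ≤ g u + x s(u, w) + yv w) :
    AntitoneOn (cvol G c x g yv S β) (Iic b) := fun _ _ _ hρb hρ => by
  simp only [cvol_eq_sum_cvolEdge]
  gcongr with e he
  exact cvolEdge_anti hc hx hyv htri he hρ hρb

end Volume

section Breakpoints

variable {g yv : V → ℝ} {S : Finset V} {ρ : ℝ}

variable (g yv S) in
noncomputable def breakpoints : Finset ℝ :=
  S.image g ∪ S.image fun v => g v - yv v

lemma eventually_le_iff_le_of_ne {α : ℝ} (h : α ≠ ρ) : ∀ᶠ r in 𝓝 ρ, (α ≤ r ↔ α ≤ ρ) := by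
  rcases h.lt_or_gt with h | h
  · filter_upwards [eventually_gt_nhds h] with r hr using iff_of_true hr.le h.le
  · filter_upwards [eventually_lt_nhds h] with r hr using iff_of_false hr.not_ge h.not_ge

lemma eventually_le_iff_le_of_notMem_breakpoints (hρ : ρ ∉ breakpoints g yv S) :
    ∀ᶠ r in 𝓝 ρ, ∀ v ∈ S, (g v ≤ r ↔ g v ≤ ρ) ∧ (g v - yv v ≤ r ↔ g v - yv v ≤ ρ) := by
  simp only [breakpoints, Finset.mem_union, Finset.mem_image, not_or, not_exists, not_and] at hρ
  exact (Finset.eventually_all _).2 fun v hv =>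
    (eventually_le_iff_le_of_ne (hρ.1 v hv)).and (eventually_le_iff_le_of_ne (hρ.2 v hv))

variable [Fintype V] [DecidableEq V] {G : SimpleGraph V} [DecidableRel G.Adj]

lemma eventually_regions_eq (hρ : ρ ∉ breakpoints g yv S) :
    ∀ᶠ r in 𝓝 ρ, ball g S r = ball g S ρ ∧ gy g yv S r = gy g yv S ρ ∧
      bdx G g yv S r = bdx G g yv S ρ := by
  filter_upwards [eventually_le_iff_le_of_notMem_breakpoints hρ] with r hr
  refine ⟨Finset.filter_congr fun v hv => (hr v hv).1, Finset.filter_congr fun v hv => ?_,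
    Finset.filter_congr fun e _ => ?_⟩
  · rw [← not_le, ← not_le, ← sub_le_iff_le_add, ← sub_le_iff_le_add, (hr v hv).1, (hr v hv).2]
  · constructor <;> rintro ⟨u, w, rfl, hu, hw, hgu, hgw⟩ <;>
      refine ⟨u, w, rfl, hu, hw, ?_, ?_⟩ <;>
      simp_all only [← not_le, (hr u hu).1, (hr w hw).2, not_false_eq_true]

variable {c x : Sym2 V → ℝ} {β : ℝ}

lemma hasDerivAt_vol (hρ : ρ ∉ breakpoints g yv S) :
    HasDerivAt (vol G c x g yv S β) (∑ e ∈ bdx G g yv S ρ, c e) ρ := by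
  have hloc : ∀ᶠ r in 𝓝 ρ, vol G c x g yv S β r =
      vol G c x g yv S β ρ + (∑ e ∈ bdx G g yv S ρ, c e) * (r - ρ) := by
    filter_upwards [eventually_regions_eq (G := G) hρ] with r ⟨hball, hgy, hbdx⟩
    rw [vol, vol, hball, hgy, hbdx]
    simp only [mul_sub, Finset.sum_sub_distrib, Finset.sum_mul]
    ring
  refine HasDerivAt.congr_of_eventuallyEq ?_ hloc
  simpa using (((hasDerivAt_id ρ).sub_const ρ).const_mul (∑ e ∈ bdx G g yv S ρ, c e)).const_add
    (vol G c x g yv S β ρ)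

lemma hasDerivAt_cvol (hρ : ρ ∉ breakpoints g yv S) :
    HasDerivAt (cvol G c x g yv S β) (-∑ e ∈ bdx G g yv S ρ, c e) ρ := by
  have hloc : ∀ᶠ r in 𝓝 ρ, cvol G c x g yv S β r =
      cvol G c x g yv S β ρ - (∑ e ∈ bdx G g yv S ρ, c e) * (r - ρ) := by
    filter_upwards [eventually_regions_eq (G := G) hρ] with r ⟨hball, hgy, hbdx⟩
    rw [cvol, cvol, bbar, bbar, hball, hgy, hbdx]
    simp only [mul_sub, Finset.sum_sub_distrib, Finset.sum_mul]
    ring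
  refine HasDerivAt.congr_of_eventuallyEq ?_ hloc
  simpa using (((hasDerivAt_id ρ).sub_const ρ).const_mul (∑ e ∈ bdx G g yv S ρ, c e)).const_sub
    (cvol G c x g yv S β ρ)

end Breakpoints

theorem stmt_13_general [Fintype V] [DecidableEq V] (G : SimpleGraph V) [DecidableRel G.Adj]
    (c x : Sym2 V → ℝ) (yv : V → ℝ)
    (hc : ∀ e, 0 ≤ c e) (hx : ∀ e, 0 ≤ x e) (hyv : ∀ w, 0 ≤ yv w)
    (S : Finset V) (z : V) (β : ℝ) (hβ : 0 < β)
    (a b : ℝ) (hab : a < b)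
    (ℓ : V → V → ℝ)
    (hle : ∀ u v, ∀ p : G.Walk u v, p.IsPath →
      ℓ u v ≤ (p.edges.map x).sum + (p.support.tail.map yv).sum)
    (hattain : ∀ u v, G.Reachable u v → ∃ p : G.Walk u v, p.IsPath ∧
      ℓ u v = (p.edges.map x).sum + (p.support.tail.map yv).sum)
    (hfar : ∀ u v, ¬ G.Reachable u v → b + yv v < ℓ u v) :
    ((∫ ρ in a..b, (∑ e ∈ bdx G (ℓ z) yv S ρ, c e) /
        (vol G c x (ℓ z) yv S β ρ *
          Real.log (Real.exp 1 * vol G c x (ℓ z) yv S β b / vol G c x (ℓ z) yv S β ρ))) ≤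
      Real.log (Real.log
        (Real.exp 1 * vol G c x (ℓ z) yv S β b / vol G c x (ℓ z) yv S β a))) ∧
    ((∫ ρ in a..b, (∑ e ∈ bdx G (ℓ z) yv S ρ, c e) /
        (cvol G c x (ℓ z) yv S β ρ *
          Real.log (Real.exp 1 * cvol G c x (ℓ z) yv S β a / cvol G c x (ℓ z) yv S β ρ))) ≤
      Real.log (Real.log
        (Real.exp 1 * cvol G c x (ℓ z) yv S β a / cvol G c x (ℓ z) yv S β b))) := by
  have htri : ∀ u w, G.Adj u w → ℓ z u ≤ b → ℓ z w ≤ ℓ z u + x s(u, w) + yv w := by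
    intro u w huw hu
    obtain ⟨p, hp, hpℓ⟩ := hattain z u <| by
      by_contra h
      linarith [hfar z u h, hyv u]
    rw [hpℓ]
    exact le_walkCost_add_of_adj hx hyv (hle z w) p hp huw
  have hT := (breakpoints (ℓ z) yv S).countable_toSet
  have hIcc : Icc a b ⊆ Iic b := Icc_subset_Iic_self
  have ha' : a ∈ Icc a b := left_mem_Icc.2 hab.le
  have hb : b ∈ Icc a b := right_mem_Icc.2 hab.le
  constructor
  · have hmono := (vol_monotoneOn (β := β) (S := S) hc hx hyv htri).mono hIcc
    have h := integral_div_mul_log_le_of_monotoneOn hab.le hmono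
      (fun ρ hρ => ⟨hβ.trans_le (beta_le_vol hc hx hyv), hmono hρ hb hρ.2⟩) hT
      fun ρ hρ => hasDerivAt_vol hρ.2
    rwa [log_log_exp_one_mul_div_self (hβ.trans_le (beta_le_vol hc hx hyv)).ne', sub_zero] at h
  · have hanti := (cvol_antitoneOn (β := β) (S := S) hc hx hyv htri).mono hIcc
    have h := integral_div_mul_log_le_of_antitoneOn hab.le hanti
      (fun ρ hρ => ⟨hβ.trans_le (beta_le_cvol hc hx hyv), hanti ha' hρ hρ.1⟩) hT
      fun ρ hρ => hasDerivAt_cvol hρ.2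
    rwa [log_log_exp_one_mul_div_self (hβ.trans_le (beta_le_cvol hc hx hyv)).ne', sub_zero] at h

/-- Region-growing lemma with edge and node lengths: with `ℓ(u;v)`
the min over `u`–`v` paths of the total edge length plus the node lengths of all path
vertices but `u` (encoded by `hle`/`hattain`, and taking a large value on unreachable
pairs), both integral bounds hold for all `0 ≤ a < b`. -/
theorem stmt_13 [Fintype V] [DecidableEq V] (G : SimpleGraph V) [DecidableRel G.Adj]
    (c x : Sym2 V → ℝ) (yv : V → ℝ)
    (hc : ∀ e, 0 ≤ c e) (hx : ∀ e, 0 ≤ x e) (hyv : ∀ w, 0 ≤ yv w)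
    (S : Finset V) (z : V) (β : ℝ) (hβ : 0 < β)
    (a b : ℝ) (ha : 0 ≤ a) (hab : a < b)
    (ℓ : V → V → ℝ)
    (hle : ∀ u v, ∀ p : G.Walk u v, p.IsPath →
      ℓ u v ≤ (p.edges.map x).sum + (p.support.tail.map yv).sum)
    (hattain : ∀ u v, G.Reachable u v → ∃ p : G.Walk u v, p.IsPath ∧
      ℓ u v = (p.edges.map x).sum + (p.support.tail.map yv).sum)
    (hfar : ∀ u v, ¬ G.Reachable u v → b + yv v < ℓ u v) :
    ((∫ ρ in a..b, (∑ e ∈ bdx G (ℓ z) yv S ρ, c e) /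
        (vol G c x (ℓ z) yv S β ρ *
          Real.log (Real.exp 1 * vol G c x (ℓ z) yv S β b / vol G c x (ℓ z) yv S β ρ))) ≤
      Real.log (Real.log
        (Real.exp 1 * vol G c x (ℓ z) yv S β b / vol G c x (ℓ z) yv S β a))) ∧
    ((∫ ρ in a..b, (∑ e ∈ bdx G (ℓ z) yv S ρ, c e) /
        (cvol G c x (ℓ z) yv S β ρ *
          Real.log (Real.exp 1 * cvol G c x (ℓ z) yv S β a / cvol G c x (ℓ z) yv S β ρ))) ≤
      Real.log (Real.log
        (Real.exp 1 * cvol G c x (ℓ z) yv S β a / cvol G c x (ℓ z) yv S β b))) :=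
  stmt_13_general G c x yv hc hx hyv S z β hβ a b hab ℓ hle hattain hfar

end MixedRegionGrow
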